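/- The vector field F vanishes at (π, 0, 0), F is differentiable there, and its Jacobian matrix at (π, 0, 0) is the diagonal matrix diag(λ₁, λ₂, λ₃) with λ₁ = 2cos α₂ + 4r cos 2α₂, λ₂ = −2K cos α₄ − 2cos α₂ + 4r cos 2α₂, and λ₃ = 2K cos α₄ − 2cos α₂ + 4r cos 2α₂. -/

import Mathlib

open Real

/-- Odd part of the pairwise coupling function: `ḡ₂(ϑ) = −cos α₂ sin ϑ + r cos 2α₂ sin 2ϑ`. -/
noncomputable def gbar2 (α₂ r : ℝ) (ϑ : ℝ) : ℝ :=
  -cos α₂ * sin ϑ + r * cos (2 * α₂) * sin (2 * ϑ)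

/-- Odd part of the interpopulation coupling function: `ḡ₄(ϑ) = −cos α₄ sin ϑ`. -/
noncomputable def gbar4 (α₄ : ℝ) (ϑ : ℝ) : ℝ := -cos α₄ * sin ϑ

/-- The reduced phase-difference vector field for M = 3 populations of N = 2 oscillators
(indices taken cyclically in `Fin 3`). -/
noncomputable def F (α₂ α₄ r K : ℝ) (ψ : Fin 3 → ℝ) : Fin 3 → ℝ := fun σ =>
  2 * gbar2 α₂ r (ψ σ)
    - K / 2 * (gbar4 α₄ (ψ (σ - 1) + ψ σ) + gbar4 α₄ (ψ σ - ψ (σ - 1)))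
    + K / 2 * (gbar4 α₄ (ψ (σ + 1) + ψ σ) + gbar4 α₄ (ψ σ - ψ (σ + 1)))

lemma hg2 (α₂ r x : ℝ) : HasDerivAt (gbar2 α₂ r)
    (-cos α₂ * cos x + r * cos (2 * α₂) * (2 * cos (2 * x))) x := by
  unfold gbar2
  have h1 : HasDerivAt (fun x : ℝ => sin (2 * x)) (cos (2 * x) * 2) x := by
    simpa using ((hasDerivAt_id x).const_mul 2).sin
  have h2 := ((Real.hasDerivAt_sin x).const_mul (-cos α₂)).add
    (h1.const_mul (r * cos (2 * α₂)))
  exact h2.congr_deriv (by ring)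

lemma hg4 (α₄ x : ℝ) : HasDerivAt (gbar4 α₄) (-cos α₄ * cos x) x := by
  unfold gbar4
  exact (Real.hasDerivAt_sin x).const_mul (-cos α₄)

lemma comp_deriv (α₂ α₄ r K : ℝ) (a b c : Fin 3) (p : Fin 3 → ℝ) :
    HasFDerivAt (fun ψ : Fin 3 → ℝ =>
      2 * gbar2 α₂ r (ψ a)
        - K / 2 * (gbar4 α₄ (ψ b + ψ a) + gbar4 α₄ (ψ a - ψ b))
        + K / 2 * (gbar4 α₄ (ψ c + ψ a) + gbar4 α₄ (ψ a - ψ c)))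
      ((2 : ℝ) • (-cos α₂ * cos (p a) + r * cos (2 * α₂) * (2 * cos (2 * p a))) •
          (ContinuousLinearMap.proj a : (Fin 3 → ℝ) →L[ℝ] ℝ)
        - (K / 2) • ((-cos α₄ * cos (p b + p a)) •
            ((ContinuousLinearMap.proj b : (Fin 3 → ℝ) →L[ℝ] ℝ) + ContinuousLinearMap.proj a)
          + (-cos α₄ * cos (p a - p b)) •
            ((ContinuousLinearMap.proj a : (Fin 3 → ℝ) →L[ℝ] ℝ) - ContinuousLinearMap.proj b))
        + (K / 2) • ((-cos α₄ * cos (p c + p a)) •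
            ((ContinuousLinearMap.proj c : (Fin 3 → ℝ) →L[ℝ] ℝ) + ContinuousLinearMap.proj a)
          + (-cos α₄ * cos (p a - p c)) •
            ((ContinuousLinearMap.proj a : (Fin 3 → ℝ) →L[ℝ] ℝ) - ContinuousLinearMap.proj c)))
      p := by
  have hpr : ∀ i : Fin 3, HasFDerivAt (fun ψ : Fin 3 → ℝ => ψ i)
      (ContinuousLinearMap.proj i : (Fin 3 → ℝ) →L[ℝ] ℝ) p := fun i => (ContinuousLinearMap.proj i : (Fin 3 → ℝ) →L[ℝ] ℝ).hasFDerivAt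
  have h1 : HasFDerivAt (fun ψ : Fin 3 → ℝ => gbar2 α₂ r (ψ a))
      ((-cos α₂ * cos (p a) + r * cos (2 * α₂) * (2 * cos (2 * p a))) •
        (ContinuousLinearMap.proj a : (Fin 3 → ℝ) →L[ℝ] ℝ)) p :=
    by have := (hg2 α₂ r (p a)).comp_hasFDerivAt p (hpr a); exact this
  have h2 : ∀ i j : Fin 3, HasFDerivAt (fun ψ : Fin 3 → ℝ => gbar4 α₄ (ψ i + ψ j))
      ((-cos α₄ * cos (p i + p j)) •
        ((ContinuousLinearMap.proj i : (Fin 3 → ℝ) →L[ℝ] ℝ) + ContinuousLinearMap.proj j)) p :=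
    fun i j => by have := (hg4 α₄ (p i + p j)).comp_hasFDerivAt p ((hpr i).add (hpr j)); exact this
  have h3 : ∀ i j : Fin 3, HasFDerivAt (fun ψ : Fin 3 → ℝ => gbar4 α₄ (ψ i - ψ j))
      ((-cos α₄ * cos (p i - p j)) •
        ((ContinuousLinearMap.proj i : (Fin 3 → ℝ) →L[ℝ] ℝ) - ContinuousLinearMap.proj j)) p :=
    fun i j => by have := (hg4 α₄ (p i - p j)).comp_hasFDerivAt p ((hpr i).sub (hpr j)); exact this
  exact ((h1.const_mul 2).sub (((h2 b a).add (h3 a b)).const_mul (K / 2))).add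
    (((h2 c a).add (h3 a c)).const_mul (K / 2))

/-- `(π, 0, 0)` (the relative equilibrium D S S) is an equilibrium of `F`, `F` is
differentiable there, and the Jacobian is `diag(λ₁, λ₂, λ₃)` with
`λ₁ = 2cos α₂ + 4r cos 2α₂`, `λ₂ = −2K cos α₄ − 2cos α₂ + 4r cos 2α₂`,
`λ₃ = 2K cos α₄ − 2cos α₂ + 4r cos 2α₂`. -/
theorem equilibrium_DSS_jacobian (α₂ α₄ r K : ℝ) (hK : 0 < K) :
    F α₂ α₄ r K ![π, 0, 0] = 0 ∧
    HasFDerivAt (F α₂ α₄ r K)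
      (LinearMap.toContinuousLinearMap (Matrix.toLin'
        (Matrix.diagonal
          ![2 * cos α₂ + 4 * r * cos (2 * α₂),
            -2 * K * cos α₄ - 2 * cos α₂ + 4 * r * cos (2 * α₂),
            2 * K * cos α₄ - 2 * cos α₂ + 4 * r * cos (2 * α₂)])))
      ![π, 0, 0] := by
  constructor
  · funext σ
    fin_cases σ <;>
      simp [F, gbar2, gbar4, Fin.isValue, show ((0 : Fin 3) - 1) = 2 by decide,
        show ((1 : Fin 3) - 1) = 0 by decide, show ((2 : Fin 3) - 1) = 1 by decide,
        show ((0 : Fin 3) + 1) = 1 by decide, show ((1 : Fin 3) + 1) = 2 by decide,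
        show ((2 : Fin 3) + 1) = 0 by decide, Real.sin_two_pi]
  · apply hasFDerivAt_pi''
    intro i
    fin_cases i
    · have key := comp_deriv α₂ α₄ r K 0 2 1 ![π, 0, 0]
      refine key.congr_fderiv ?_
      ext v
      simp [Matrix.mulVec_diagonal, Real.cos_two_pi]
      ring
    · have key := comp_deriv α₂ α₄ r K 1 0 2 ![π, 0, 0]
      refine key.congr_fderiv ?_
      ext v
      simp [Matrix.mulVec_diagonal]
      ring
    · have key := comp_deriv α₂ α₄ r K 2 1 0 ![π, 0, 0]
      refine key.congr_fderiv ?_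
      ext v
      simp [Matrix.mulVec_diagonal]
      ring
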